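/- arXiv:2309.17308 — 3 statements merged into one kernel-verified Lean document; each statement's English description precedes it below -/
import Mathlib

section
/- The Poisson algebra C[x_1,...,x_N, y_1,...,y_N]^{S_N} of diagonal S_N-invariants, with Poisson bracket {y_i, x_j} = δ_{ij}, is generated as a Poisson algebra by the two subalgebras C[x_1,...,x_N]^{S_N} and C[y_1,...,y_N]^{S_N}. -/
/-!
The polarized power sums `p_{a,b} = ∑ᵢ xᵢ^a yᵢ^b` are Poisson brackets of power sums in the
`x` and in the `y` alone: `{p_{0,b+1}, p_{a+1,0}} = (a+1)(b+1) p_{a,b}`. Multiplying `p_{c₀}`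
into the augmented monomial `m̃_c = ∑_{f injective} ∏ₖ x_{f k}^{aₖ} y_{f k}^{bₖ}` gives `m̃`
with one more factor plus terms `m̃` with as many factors as `c`, so by induction every `m̃_c`
is a polynomial in the `p_{a,b}`. Summing a monomial over `S_N` gives an `m̃_c`, and since
`N!` is invertible, every diagonal invariant is a linear combination of such orbit sums.
-/

open MvPolynomial Finset

/-- The standard Poisson bracket on `ℂ[x₁,…,x_N,y₁,…,y_N]` with `{y_i, x_j} = δ_{ij}`:
`{f, g} = ∑ᵢ (∂f/∂yᵢ · ∂g/∂xᵢ − ∂f/∂xᵢ · ∂g/∂yᵢ)`, where `xᵢ = X (inl i)`,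
`yᵢ = X (inr i)`. -/
noncomputable def poissonBracket (N : ℕ) (f g : MvPolynomial (Fin N ⊕ Fin N) ℂ) :
    MvPolynomial (Fin N ⊕ Fin N) ℂ :=
  ∑ i : Fin N,
    (pderiv (Sum.inr i) f * pderiv (Sum.inl i) g -
      pderiv (Sum.inl i) f * pderiv (Sum.inr i) g)

lemma Subalgebra.mem_of_nsmul_mem {K A : Type*} [Field K] [CharZero K] [Semiring A]
    [Algebra K A] (S : Subalgebra K A) {n : ℕ} (hn : n ≠ 0) {x : A} (h : n • x ∈ S) : x ∈ S := by
  rw [← Nat.cast_smul_eq_nsmul K] at h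
  exact (Submodule.smul_mem_iff (Subalgebra.toSubmodule S) (Nat.cast_ne_zero.2 hn)).1 h

namespace MvPolynomial

variable {ι : Type*} (R : Type*) [CommRing R]

noncomputable def diagMonomial (i : ι) (c : ℕ × ℕ) : MvPolynomial (ι ⊕ ι) R :=
  X (Sum.inl i) ^ c.1 * X (Sum.inr i) ^ c.2

variable {R}

@[simp]
lemma diagMonomial_zero (i : ι) : diagMonomial R i 0 = 1 := by
  simp [diagMonomial]

lemma diagMonomial_add (i : ι) (c d : ℕ × ℕ) :
    diagMonomial R i (c + d) = diagMonomial R i c * diagMonomial R i d := by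
  simp only [diagMonomial, Prod.fst_add, Prod.snd_add, pow_add]
  ring

lemma rename_diagMonomial {κ : Type*} (σ : ι → κ) (i : ι) (c : ℕ × ℕ) :
    rename (Sum.map σ σ) (diagMonomial R i c) = diagMonomial R (σ i) c := by
  simp [diagMonomial]

lemma prod_diagMonomial_add_single {κ : Type*} [Fintype κ] [DecidableEq κ] (g : κ → ι)
    (c : κ → ℕ × ℕ) (k₀ : κ) (e : ℕ × ℕ) :
    ∏ k, diagMonomial R (g k) ((c + Pi.single k₀ e : κ → ℕ × ℕ) k) =
      diagMonomial R (g k₀) e * ∏ k, diagMonomial R (g k) (c k) := by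
  have hsingle : ∏ k, diagMonomial R (g k) ((Pi.single k₀ e : κ → ℕ × ℕ) k) =
      diagMonomial R (g k₀) e :=
    (Fintype.prod_eq_single k₀ fun k hk => by simp [hk]).trans (by simp)
  simp only [Pi.add_apply, diagMonomial_add, prod_mul_distrib, hsingle, mul_comm]

variable [Fintype ι]

lemma monomial_one_eq_prod_diagMonomial (d : ι ⊕ ι →₀ ℕ) :
    monomial d (1 : R) = ∏ i, diagMonomial R i (d (Sum.inl i), d (Sum.inr i)) := by
  rw [monomial_eq, C_1, one_mul, Finsupp.prod_fintype _ _ (fun _ => pow_zero _),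
    Fintype.prod_sum_type, ← prod_mul_distrib]
  rfl

variable (ι R)

noncomputable def polarizedPsum (c : ℕ × ℕ) : MvPolynomial (ι ⊕ ι) R :=
  ∑ i, diagMonomial R i c

lemma polarizedPsum_fst_zero (b : ℕ) :
    polarizedPsum ι R (0, b) = rename Sum.inr (psum ι R b) := by
  simp [polarizedPsum, diagMonomial, psum]

lemma polarizedPsum_snd_zero (a : ℕ) :
    polarizedPsum ι R (a, 0) = rename Sum.inl (psum ι R a) := by
  simp [polarizedPsum, diagMonomial, psum]

variable {ι R}

lemma pderiv_inl_polarizedPsum_succ [DecidableEq ι] (i : ι) (a : ℕ) :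
    pderiv (Sum.inl i) (polarizedPsum ι R (a + 1, 0)) = (a + 1) • X (Sum.inl i) ^ a := by
  rw [polarizedPsum, map_sum, sum_eq_single i]
  · simp [diagMonomial, nsmul_eq_mul]
  · intro j _ hj
    simp [diagMonomial, pderiv_X_of_ne (Sum.inl_injective.ne hj)]
  · simp

lemma pderiv_inr_polarizedPsum_succ [DecidableEq ι] (i : ι) (b : ℕ) :
    pderiv (Sum.inr i) (polarizedPsum ι R (0, b + 1)) = (b + 1) • X (Sum.inr i) ^ b := by
  rw [polarizedPsum, map_sum, sum_eq_single i]
  · simp [diagMonomial, nsmul_eq_mul]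
  · intro j _ hj
    simp [diagMonomial, pderiv_X_of_ne (Sum.inr_injective.ne hj)]
  · simp

lemma pderiv_inl_polarizedPsum_fst_zero (i : ι) (b : ℕ) :
    pderiv (Sum.inl i) (polarizedPsum ι R (0, b)) = 0 := by
  simp [polarizedPsum, diagMonomial]

lemma pderiv_inr_polarizedPsum_snd_zero (i : ι) (a : ℕ) :
    pderiv (Sum.inr i) (polarizedPsum ι R (a, 0)) = 0 := by
  simp [polarizedPsum, diagMonomial]

lemma poissonBracket_polarizedPsum (N a b : ℕ) :
    poissonBracket N (polarizedPsum (Fin N) ℂ (0, b + 1)) (polarizedPsum (Fin N) ℂ (a + 1, 0)) =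
      ((a + 1) * (b + 1)) • polarizedPsum (Fin N) ℂ (a, b) := by
  rw [poissonBracket]
  conv_rhs => rw [polarizedPsum, smul_sum]
  refine sum_congr rfl fun i _ => ?_
  rw [pderiv_inr_polarizedPsum_succ, pderiv_inl_polarizedPsum_succ,
    pderiv_inl_polarizedPsum_fst_zero, pderiv_inr_polarizedPsum_snd_zero, zero_mul, sub_zero,
    smul_mul_smul_comm, diagMonomial, mul_comm (b + 1), mul_comm (X _ ^ b)]

lemma polarizedPsum_mem_of_poissonBracket_mem {N : ℕ}
    {S : Subalgebra ℂ (MvPolynomial (Fin N ⊕ Fin N) ℂ)}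
    (hbr : ∀ f ∈ S, ∀ g ∈ S, poissonBracket N f g ∈ S)
    (hx : (symmetricSubalgebra (Fin N) ℂ).map (rename Sum.inl) ≤ S)
    (hy : (symmetricSubalgebra (Fin N) ℂ).map (rename Sum.inr) ≤ S) (c : ℕ × ℕ) :
    polarizedPsum (Fin N) ℂ c ∈ S := by
  obtain ⟨a, b⟩ := c
  have hpx : polarizedPsum (Fin N) ℂ (a + 1, 0) ∈ S :=
    hx ⟨_, psum_isSymmetric _ _ _, (polarizedPsum_snd_zero _ _ _).symm⟩
  have hpy : polarizedPsum (Fin N) ℂ (0, b + 1) ∈ S :=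
    hy ⟨_, psum_isSymmetric _ _ _, (polarizedPsum_fst_zero _ _ _).symm⟩
  have h := hbr _ hpy _ hpx
  rw [poissonBracket_polarizedPsum] at h
  exact S.mem_of_nsmul_mem (by positivity) h

variable (ι R) [DecidableEq ι]

/-- The diagonal analogue of the augmented monomial symmetric function. -/
noncomputable def augmentedMonomial {κ : Type*} [Fintype κ] [DecidableEq κ] (c : κ → ℕ × ℕ) :
    MvPolynomial (ι ⊕ ι) R :=
  ∑ f ∈ univ.filter (fun f : κ → ι => f.Injective), ∏ k, diagMonomial R (f k) (c k)

variable {ι R}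

lemma augmentedMonomial_of_isEmpty {κ : Type*} [Fintype κ] [DecidableEq κ] [IsEmpty κ]
    (c : κ → ℕ × ℕ) : augmentedMonomial ι R c = 1 := by
  simp [augmentedMonomial, Function.injective_of_subsingleton]

lemma augmentedMonomial_cons {r : ℕ} (c₀ : ℕ × ℕ) (c : Fin r → ℕ × ℕ) :
    augmentedMonomial ι R (Fin.cons c₀ c) =
      ∑ g ∈ univ.filter (fun g : Fin r → ι => g.Injective), ∑ j ∈ (univ.image g)ᶜ,
        diagMonomial R j c₀ * ∏ k, diagMonomial R (g k) (c k) := by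
  rw [augmentedMonomial, sum_filter, ← (Fin.consEquiv fun _ => ι).sum_comp,
    Fintype.sum_prod_type, sum_comm, sum_filter]
  refine sum_congr rfl fun g _ => ?_
  by_cases hg : g.Injective
  · rw [show (univ.image g)ᶜ = univ.filter (fun j => ∀ k, g k ≠ j) by ext; simp]
    simp [Fin.consEquiv, Fin.cons_injective_iff, Fin.prod_univ_succ, hg, sum_ite]
  · simp [Fin.consEquiv, Fin.cons_injective_iff, hg]

lemma sum_eq_sum_compl_image_add_sum {M : Type*} [AddCommMonoid M] {κ : Type*} [Fintype κ]
    {g : κ → ι} (hg : g.Injective) (F : ι → M) :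
    ∑ j, F j = ∑ j ∈ (univ.image g)ᶜ, F j + ∑ k, F (g k) := by
  rw [← sum_compl_add_sum (univ.image g), sum_image fun _ _ _ _ h => hg h]

/-- In `p_{c₀} · m̃_c` the new index is either fresh or equal to one of the indices of `m̃_c`. -/
lemma polarizedPsum_mul_augmentedMonomial {r : ℕ} (c₀ : ℕ × ℕ) (c : Fin r → ℕ × ℕ) :
    polarizedPsum ι R c₀ * augmentedMonomial ι R c =
      augmentedMonomial ι R (Fin.cons c₀ c) +
        ∑ k, augmentedMonomial ι R (c + Pi.single k c₀ : Fin r → ℕ × ℕ) := by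
  rw [augmentedMonomial_cons, polarizedPsum, augmentedMonomial, sum_mul_sum, sum_comm]
  simp_rw [augmentedMonomial]
  rw [sum_comm (s := (univ : Finset (Fin r))), ← sum_add_distrib]
  refine sum_congr rfl fun g hg => ?_
  rw [sum_eq_sum_compl_image_add_sum (mem_filter.1 hg).2]
  simp only [prod_diagMonomial_add_single]

lemma augmentedMonomial_mem {S : Subalgebra R (MvPolynomial (ι ⊕ ι) R)}
    (hS : ∀ c, polarizedPsum ι R c ∈ S) {r : ℕ} (c : Fin r → ℕ × ℕ) :
    augmentedMonomial ι R c ∈ S := by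
  induction r with
  | zero => rw [augmentedMonomial_of_isEmpty]; exact S.one_mem
  | succ r ih =>
    rw [← Fin.cons_self_tail c,
      eq_sub_of_add_eq (polarizedPsum_mul_augmentedMonomial _ _).symm]
    exact sub_mem (mul_mem (hS _) (ih _)) (sum_mem fun k _ => ih _)

lemma sum_rename_perm_monomial_one (d : ι ⊕ ι →₀ ℕ) :
    ∑ σ : Equiv.Perm ι, rename (Sum.map σ σ) (monomial d (1 : R)) =
      augmentedMonomial ι R fun i => (d (Sum.inl i), d (Sum.inr i)) := by
  rw [augmentedMonomial, monomial_one_eq_prod_diagMonomial]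
  refine sum_bij (fun σ _ => ⇑σ) (fun σ _ => mem_filter.2 ⟨mem_univ _, σ.injective⟩)
    (fun σ _ τ _ h => DFunLike.coe_injective h)
    (fun f hf => ⟨Equiv.ofBijective f (Finite.injective_iff_bijective.1 (mem_filter.1 hf).2),
      mem_univ _, rfl⟩)
    fun σ _ => ?_
  simp [map_prod, rename_diagMonomial]

lemma sum_rename_perm_mem {S : Subalgebra R (MvPolynomial (ι ⊕ ι) R)}
    (hS : ∀ c : ι → ℕ × ℕ, augmentedMonomial ι R c ∈ S) (f : MvPolynomial (ι ⊕ ι) R) :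
    ∑ σ : Equiv.Perm ι, rename (Sum.map σ σ) f ∈ S := by
  induction f using MvPolynomial.induction_on' with
  | monomial d a =>
    rw [← mul_one a, ← smul_eq_mul, ← smul_monomial]
    simp_rw [map_smul, ← smul_sum, sum_rename_perm_monomial_one]
    exact S.smul_mem (hS _) a
  | add p q hp hq =>
    simp_rw [map_add, sum_add_distrib]
    exact add_mem hp hq

lemma mem_of_forall_rename_perm_eq {K : Type*} [Field K] [CharZero K]
    {S : Subalgebra K (MvPolynomial (ι ⊕ ι) K)}
    (hS : ∀ c : ι → ℕ × ℕ, augmentedMonomial ι K c ∈ S) {f : MvPolynomial (ι ⊕ ι) K}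
    (hf : ∀ σ : Equiv.Perm ι, rename (Sum.map σ σ) f = f) : f ∈ S := by
  have h := sum_rename_perm_mem hS f
  simp only [hf, sum_const, card_univ] at h
  exact S.mem_of_nsmul_mem Fintype.card_ne_zero h

end MvPolynomial

/-- The Poisson algebra `ℂ[x₁,…,x_N,y₁,…,y_N]^{S_N}` of diagonal `S_N`-invariants is
generated, as a Poisson algebra, by the subalgebras `ℂ[x]^{S_N}` and `ℂ[y]^{S_N}`:
every subalgebra `S` closed under the Poisson bracket and containing both of them
contains all diagonal invariants. -/
theorem stmt3 (N : ℕ) (S : Subalgebra ℂ (MvPolynomial (Fin N ⊕ Fin N) ℂ))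
    (hbr : ∀ f ∈ S, ∀ g ∈ S, poissonBracket N f g ∈ S)
    (hx : (symmetricSubalgebra (Fin N) ℂ).map (rename Sum.inl) ≤ S)
    (hy : (symmetricSubalgebra (Fin N) ℂ).map (rename Sum.inr) ≤ S) :
    ∀ f : MvPolynomial (Fin N ⊕ Fin N) ℂ,
      (∀ σ : Equiv.Perm (Fin N), rename (Sum.map σ σ) f = f) → f ∈ S := by
  intro f hf
  have hpsum := polarizedPsum_mem_of_poissonBracket_mem hbr hx hy
  exact mem_of_forall_rename_perm_eq (fun c => augmentedMonomial_mem hpsum c) hf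
end

section
/- In the Poisson algebra C[x_{ij}, y_{ij}, γ_i, β_i] with comoment map μ*(E_{kl}) = Σ_p (x_{kp}y_{pl} − x_{pl}y_{kp}) + γ_k β_l, the power sums Tr(X^m) and Tr(Y^m) are invariants: {μ*(E_{kl}), Tr(X^m)} = 0 and {μ*(E_{kl}), Tr(Y^m)} = 0 for all k, l and all m ≥ 0. -/
open MvPolynomial Matrix

abbrev V4 (N : ℕ) := (Fin N × Fin N) ⊕ (Fin N × Fin N) ⊕ Fin N ⊕ Fin N

noncomputable def xv (N : ℕ) (i j : Fin N) : MvPolynomial (V4 N) ℂ :=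
  X (Sum.inl (i, j))
noncomputable def yv (N : ℕ) (i j : Fin N) : MvPolynomial (V4 N) ℂ :=
  X (Sum.inr (Sum.inl (i, j)))
noncomputable def gv (N : ℕ) (i : Fin N) : MvPolynomial (V4 N) ℂ :=
  X (Sum.inr (Sum.inr (Sum.inl i)))
noncomputable def bv (N : ℕ) (i : Fin N) : MvPolynomial (V4 N) ℂ :=
  X (Sum.inr (Sum.inr (Sum.inr i)))

/-- The Poisson bracket with `{y_{ij}, x_{kl}} = δ_{il}δ_{jk}`, `{β_i, γ_j} = δ_{ij}`. -/
noncomputable def pb4 (N : ℕ) (f g : MvPolynomial (V4 N) ℂ) : MvPolynomial (V4 N) ℂ :=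
  (∑ i : Fin N, ∑ j : Fin N,
    (pderiv (Sum.inr (Sum.inl (i, j))) f * pderiv (Sum.inl (j, i)) g -
      pderiv (Sum.inl (j, i)) f * pderiv (Sum.inr (Sum.inl (i, j))) g)) +
  ∑ i : Fin N,
    (pderiv (Sum.inr (Sum.inr (Sum.inr i))) f * pderiv (Sum.inr (Sum.inr (Sum.inl i))) g -
      pderiv (Sum.inr (Sum.inr (Sum.inl i))) f * pderiv (Sum.inr (Sum.inr (Sum.inr i))) g)

noncomputable def mu (N : ℕ) (i j : Fin N) : MvPolynomial (V4 N) ℂ :=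
  (∑ p : Fin N, (xv N i p * yv N p j - xv N p j * yv N i p)) + gv N i * bv N j

/-- The generic matrices `X = (x_{ij})`, `Y = (y_{ij})`. -/
noncomputable def XM (N : ℕ) : Matrix (Fin N) (Fin N) (MvPolynomial (V4 N) ℂ) :=
  Matrix.of fun i j => xv N i j
noncomputable def YM (N : ℕ) : Matrix (Fin N) (Fin N) (MvPolynomial (V4 N) ℂ) :=
  Matrix.of fun i j => yv N i j

/-!
For fixed `f`, `g ↦ {f, g}` is a derivation `D`. For `f = μ*(E_{kl})` it acts on the generic
matrices by a commutator, `D X = [E_{lk}, X]` and `D Y = [E_{lk}, Y]`. By the Leibniz rule this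
propagates to all powers, `D (X^m) = [E_{lk}, X^m]`, and the trace of a commutator vanishes.
-/

namespace Derivation

variable {R A : Type*} [CommSemiring R]

theorem finset_sum_apply [CommSemiring A] [Algebra R A] {M ι : Type*} [AddCommMonoid M]
    [Module A M] [Module R M] (s : Finset ι) (D : ι → Derivation R A M) (a : A) :
    (∑ i ∈ s, D i) a = ∑ i ∈ s, D i a := by
  rw [← coeFnAddMonoidHom_apply, map_sum, Finset.sum_apply]
  rfl

theorem map_matrix_mul [CommSemiring A] [Algebra R A] (D : Derivation R A A) {n : Type*}
    [Fintype n] (P Q : Matrix n n A) : (P * Q).map D = P.map D * Q + P * Q.map D := by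
  ext a b
  simp only [Matrix.map_apply, Matrix.mul_apply, Matrix.add_apply, map_sum, leibniz, smul_eq_mul,
    Finset.sum_add_distrib, mul_comm (Q _ b)]
  exact add_comm _ _

variable [CommRing A] [Algebra R A] (D : Derivation R A A) {n : Type*} [Fintype n] [DecidableEq n]

theorem map_matrix_pow_of_map_eq_commutator {M C : Matrix n n A} (hM : M.map D = C * M - M * C)
    (m : ℕ) : (M ^ m).map D = C * M ^ m - M ^ m * C := by
  induction m with
  | zero =>
    ext a b
    simp [Matrix.one_apply, apply_ite D]
  | succ m ih =>
    rw [pow_succ, map_matrix_mul, ih, hM]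
    noncomm_ring

theorem trace_pow_eq_zero_of_map_eq_commutator {M C : Matrix n n A}
    (hM : M.map D = C * M - M * C) (m : ℕ) : D (M ^ m).trace = 0 := by
  rw [AddMonoidHom.map_trace, map_matrix_pow_of_map_eq_commutator D hM, Matrix.trace_sub,
    Matrix.trace_mul_comm, sub_self]

end Derivation

noncomputable def pb4Derivation (N : ℕ) (f : MvPolynomial (V4 N) ℂ) :
    Derivation ℂ (MvPolynomial (V4 N) ℂ) (MvPolynomial (V4 N) ℂ) :=
  (∑ i : Fin N, ∑ j : Fin N,
    (pderiv (Sum.inr (Sum.inl (i, j))) f • pderiv (Sum.inl (j, i)) -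
      pderiv (Sum.inl (j, i)) f • pderiv (Sum.inr (Sum.inl (i, j))))) +
  ∑ i : Fin N,
    (pderiv (Sum.inr (Sum.inr (Sum.inr i))) f • pderiv (Sum.inr (Sum.inr (Sum.inl i))) -
      pderiv (Sum.inr (Sum.inr (Sum.inl i))) f • pderiv (Sum.inr (Sum.inr (Sum.inr i))))

theorem pb4Derivation_apply (N : ℕ) (f g : MvPolynomial (V4 N) ℂ) :
    pb4Derivation N f g = pb4 N f g := by
  simp only [pb4Derivation, pb4, Derivation.add_apply, Derivation.sub_apply,
    Derivation.smul_apply, Derivation.finset_sum_apply, smul_eq_mul]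

theorem map_XM_pb4Derivation_mu (N : ℕ) (k l : Fin N) :
    (XM N).map (pb4Derivation N (mu N k l)) = single l k 1 * XM N - XM N * single l k 1 := by
  ext a b
  rw [Matrix.map_apply, pb4Derivation_apply]
  simp [pb4, mu, XM, xv, yv, gv, bv, pderiv_X, Pi.single_apply, Matrix.mul_apply,
    Matrix.single_apply, ite_and, Finset.sum_ite_eq, Finset.sum_ite_eq']

theorem map_YM_pb4Derivation_mu (N : ℕ) (k l : Fin N) :
    (YM N).map (pb4Derivation N (mu N k l)) = single l k 1 * YM N - YM N * single l k 1 := by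
  ext a b
  rw [Matrix.map_apply, pb4Derivation_apply]
  simp [pb4, mu, YM, xv, yv, gv, bv, pderiv_X, Pi.single_apply, Matrix.mul_apply,
    Matrix.single_apply, ite_and, Finset.sum_ite_eq, Finset.sum_ite_eq']

/-- The power sums `Tr(X^m)` and `Tr(Y^m)` are invariants:
`{μ*(E_{kl}), Tr(X^m)} = 0` and `{μ*(E_{kl}), Tr(Y^m)} = 0` for all `k, l, m`. -/
theorem stmt6 (N : ℕ) (k l : Fin N) (m : ℕ) :
    pb4 N (mu N k l) ((XM N ^ m).trace) = 0 ∧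
    pb4 N (mu N k l) ((YM N ^ m).trace) = 0 := by
  rw [← pb4Derivation_apply, ← pb4Derivation_apply]
  exact ⟨(pb4Derivation N (mu N k l)).trace_pow_eq_zero_of_map_eq_commutator
      (map_XM_pb4Derivation_mu N k l) m,
    (pb4Derivation N (mu N k l)).trace_pow_eq_zero_of_map_eq_commutator
      (map_YM_pb4Derivation_mu N k l) m⟩
end

section
/- The identity of formal q-series η(q)^3 · Σ_{n≥1} σ_1(n) q^n = Σ_{n≥0} (−1)^n ((n+3)(n+2)(n+1)/6 + (n+2)(n+1)n/6) q^{(3+2n)^2/8 − 1/8} holds, where η(q) = q^{1/24} Π_{m≥1}(1 − q^m); equivalently, sch_{W_{S_3}}(q) = (1 − E_2(q))/24, where sch_{W_{S_3}}(q) = (1/η(q)^3) Σ_{n≥0} (−1)^n (C(3+n,3) + C(2+n,3)) q^{(3+2n)^2/8}. -/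
open PowerSeries

/-- `∑_{n≥1} σ₁(n) qⁿ` as a formal power series. -/
noncomputable def S12 : PowerSeries ℤ :=
  PowerSeries.mk fun n => if n = 0 then 0 else (∑ d ∈ n.divisors, (d : ℤ))

/-- The right-hand side `∑_{n≥0} (−1)^n (C(n+3,3) + C(n+2,3)) q^{(3+2n)²/8 − 1/8}`.
Note `(3+2n)²/8 − 1/8 = 1 + n(n+3)/2` and
`C(n+3,3) = (n+3)(n+2)(n+1)/6`, `C(n+2,3) = (n+2)(n+1)n/6`. -/
noncomputable def T12 : PowerSeries ℤ :=
  PowerSeries.mk fun k =>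
    ∑ n ∈ Finset.range (k + 1),
      if 1 + n * (n + 3) / 2 = k then
        (-1 : ℤ) ^ n * (((n + 3).choose 3 : ℤ) + ((n + 2).choose 3 : ℤ))
      else 0

/-!
Write `P_t = ∏_{m ≤ t} (1 - q^m)`. Taking the logarithmic derivative,
`q (P_t³)' = -3 P_t³ ∑_{m ≤ t} m q^m / (1 - q^m)`, and this Lambert series agrees with
`∑ σ₁(n) qⁿ` up to `q^t`. So the coefficient of `q^a` in `P³ · ∑ σ₁(n) qⁿ` is `-a/3` times that of
`P³`, and Jacobi's identity `P³ = ∑_k (-1)^k (2k+1) q^{k(k+1)/2}` finishes the proof: its term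
`k = n + 1` matches the `n`-th term on the right, as
`3 (C(n+3,3) + C(n+2,3)) = (2n+3) (n+1)(n+2)/2`.

Jacobi's identity comes from the finite triple product
`∑_j (-1)^{j+n} q^{(j-n)(j-n+1)/2} [2n choose j]_q z^j = ∏_{i<n} (z - q^i)(1 - q^{i+1} z)`.
Its right side vanishes at `z = 1` and has derivative `(q;q)_n (q;q)_{n-1}` there; multiplying by
`(1 - q^n) (q;q)_n` turns each Gaussian binomial into `1 + O(q^{n - (j-n)(j-n+1)/2})`, and pairing
`j = n + k` with `j = n - 1 - k` produces the weights `2k + 1`.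
-/

open Finset

namespace JacobiCube

noncomputable section

variable {R : Type*} [CommRing R]

def qProd (a b : ℕ) : R⟦X⟧ := ∏ m ∈ Ioc a b, (1 - X ^ m)

theorem qProd_mul_qProd {a b c : ℕ} (hab : a ≤ b) (hbc : b ≤ c) :
    (qProd a b * qProd b c : R⟦X⟧) = qProd a c :=
  prod_Ioc_consecutive _ hab hbc

@[simp]
theorem qProd_self (a : ℕ) : (qProd a a : R⟦X⟧) = 1 := by simp [qProd]

theorem qProd_succ {a b : ℕ} (hab : a ≤ b) :
    (qProd a (b + 1) : R⟦X⟧) = qProd a b * (1 - X ^ (b + 1)) :=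
  prod_Ioc_succ_top hab _

theorem isUnit_qProd (a b : ℕ) : IsUnit (qProd a b : R⟦X⟧) := by
  refine IsUnit.of_mul_eq_one (invOfUnit (qProd a b) 1) (mul_invOfUnit _ _ ?_)
  simp only [qProd, map_prod, map_sub, map_one, map_pow, constantCoeff_X, Units.val_one]
  exact prod_eq_one fun m hm => by rw [zero_pow (Nat.ne_zero_of_lt (mem_Ioc.1 hm).1), sub_zero]

theorem X_pow_dvd_mul_sub_one {M : ℕ} {f g : R⟦X⟧} (hf : X ^ M ∣ f - 1)
    (hg : X ^ M ∣ g - 1) : X ^ M ∣ f * g - 1 := by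
  have h : f * g - 1 = f * (g - 1) + (f - 1) := by ring
  exact h ▸ dvd_add (dvd_mul_of_dvd_right hg f) hf

theorem X_pow_dvd_one_sub_X_pow_sub_one {M m : ℕ} (h : M ≤ m) :
    (X : R⟦X⟧) ^ M ∣ (1 - X ^ m) - 1 := by
  rw [sub_sub_cancel_left]
  exact (pow_dvd_pow X h).neg_right

theorem X_pow_dvd_qProd_sub_one (a b : ℕ) : (X : R⟦X⟧) ^ (a + 1) ∣ qProd a b - 1 :=
  prod_induction _ (fun f => X ^ (a + 1) ∣ f - 1) (fun _ _ => X_pow_dvd_mul_sub_one)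
    (by simp) fun m hm => X_pow_dvd_one_sub_X_pow_sub_one (mem_Ioc.1 hm).1

def qBinom : ℕ → ℕ → R⟦X⟧
  | _, 0 => 1
  | 0, _ + 1 => 0
  | N + 1, r + 1 => qBinom N r + X ^ (r + 1) * qBinom N (r + 1)

@[simp]
theorem qBinom_zero_right (N : ℕ) : (qBinom N 0 : R⟦X⟧) = 1 := by cases N <;> rfl

theorem qBinom_succ_succ (N r : ℕ) :
    (qBinom (N + 1) (r + 1) : R⟦X⟧) = qBinom N r + X ^ (r + 1) * qBinom N (r + 1) := rfl

theorem qBinom_eq_zero_of_lt {N r : ℕ} (h : N < r) : (qBinom N r : R⟦X⟧) = 0 := by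
  induction N generalizing r with
  | zero => obtain ⟨r, rfl⟩ := Nat.exists_eq_add_of_lt h; rfl
  | succ N ih =>
    obtain ⟨r, rfl⟩ := Nat.exists_eq_add_of_lt (Nat.zero_lt_of_lt h)
    rw [zero_add, qBinom_succ_succ, ih (by omega), ih (by omega), mul_zero, add_zero]

@[simp]
theorem qBinom_self (N : ℕ) : (qBinom N N : R⟦X⟧) = 1 := by
  induction N with
  | zero => rfl
  | succ N ih => rw [qBinom_succ_succ, ih, qBinom_eq_zero_of_lt N.lt_succ_self, mul_zero, add_zero]

theorem qProd_mul_qProd_mul_qBinom (r s : ℕ) :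
    (qProd 0 r * qProd 0 s * qBinom (r + s) r : R⟦X⟧) = qProd 0 (r + s) := by
  induction r generalizing s with
  | zero => simp
  | succ r ihr =>
    induction s with
    | zero => simp
    | succ s ihs =>
      have hr := ihr (s + 1)
      rw [show r + (s + 1) = r + s + 1 by ring, qProd_succ (Nat.zero_le s)] at hr
      rw [show r + 1 + s = r + s + 1 by ring, qProd_succ (Nat.zero_le r)] at ihs
      rw [show r + 1 + (s + 1) = r + s + 1 + 1 by ring, qBinom_succ_succ,
        qProd_succ (Nat.zero_le r), qProd_succ (Nat.zero_le s),
        qProd_succ (Nat.zero_le (r + s + 1))]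
      linear_combination (1 - X ^ (r + 1)) * hr + X ^ (r + 1) * (1 - X ^ (s + 1)) * ihs

theorem eq_qBinom_of_mul_eq {r s : ℕ} {f : R⟦X⟧}
    (h : qProd 0 r * qProd 0 s * f = qProd 0 (r + s)) : f = qBinom (r + s) r :=
  ((isUnit_qProd 0 r).mul (isUnit_qProd 0 s)).mul_left_cancel
    (h.trans (qProd_mul_qProd_mul_qBinom r s).symm)

theorem qBinom_symm (r s : ℕ) : (qBinom (r + s) r : R⟦X⟧) = qBinom (r + s) s :=
  (eq_qBinom_of_mul_eq (by rw [mul_comm (qProd 0 r), add_comm r, qProd_mul_qProd_mul_qBinom])).symm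

theorem qBinom_add_succ_succ (r s : ℕ) :
    (qBinom (r + s + 1) (r + 1) : R⟦X⟧) =
      X ^ s * qBinom (r + s) r + qBinom (r + s) (r + 1) := by
  cases s with
  | zero => simp [qBinom_eq_zero_of_lt]
  | succ t =>
    rw [show r + (t + 1) + 1 = (r + 1) + (t + 1) by ring, qBinom_symm,
      show r + 1 + (t + 1) = (r + 1 + t) + 1 by ring, qBinom_succ_succ,
      show r + 1 + t = (r + 1) + t by ring, ← qBinom_symm, show r + 1 + t = r + (t + 1) by ring,
      ← qBinom_symm]
    ring

theorem qBinom_add_two_one (N : ℕ) :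
    (qBinom (N + 2) 1 : R⟦X⟧) = 1 + X ^ (N + 1) + X * qBinom N 1 := by
  have h := qBinom_add_succ_succ (R := R) 0 N
  rw [zero_add, zero_add] at h
  rw [qBinom_succ_succ, h]
  simp only [qBinom_zero_right]
  ring

theorem qBinom_add_two_add_two (j s : ℕ) :
    (qBinom (j + s + 2) (j + 2) : R⟦X⟧) = (1 + X ^ (j + s + 1)) * qBinom (j + s) (j + 1)
      + X ^ (j + 2) * qBinom (j + s) (j + 2) + X ^ s * qBinom (j + s) j := by
  rw [qBinom_succ_succ (j + s + 1) (j + 1), qBinom_add_succ_succ j s]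
  cases s with
  | zero => simp [qBinom_eq_zero_of_lt]
  | succ t =>
    rw [show j + (t + 1) + 1 = j + 1 + t + 1 by ring, qBinom_add_succ_succ (j + 1) t,
      show j + 1 + t = j + (t + 1) by ring]
    ring

def tri : ℕ → ℕ
  | 0 => 0
  | k + 1 => tri k + k + 1

theorem tri_succ (k : ℕ) : tri (k + 1) = tri k + k + 1 := rfl

theorem le_tri (k : ℕ) : k ≤ tri k := by
  induction k with
  | zero => rfl
  | succ k ih => rw [tri_succ]; omega

theorem two_mul_tri (k : ℕ) : 2 * tri k = k * (k + 1) := by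
  induction k with
  | zero => rfl
  | succ k ih => rw [tri_succ]; linarith

def jacobiExp (n j : ℕ) : ℕ := if n ≤ j then tri (j - n) else tri (n - j - 1)

theorem two_mul_jacobiExp (n j : ℕ) :
    (2 * jacobiExp n j : ℤ) = ((j : ℤ) - n) * ((j : ℤ) - n + 1) := by
  unfold jacobiExp
  split_ifs with h
  · have := two_mul_tri (j - n)
    zify [h] at this
    linear_combination this
  · obtain ⟨d, rfl⟩ := Nat.exists_eq_add_of_lt (Nat.lt_of_not_le h)
    have := two_mul_tri d
    zify at this
    rw [show j + d + 1 - j - 1 = d by omega]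
    push_cast
    linear_combination this

theorem jacobiExp_succ_succ (n j : ℕ) : jacobiExp (n + 1) (j + 1) = jacobiExp n j := by
  unfold jacobiExp
  split_ifs <;> first | omega | congr 1; omega

theorem jacobiExp_add_self (n k : ℕ) : jacobiExp n (n + k) = tri k := by
  simp [jacobiExp]

theorem jacobiExp_sub_one_sub (n k : ℕ) (hk : k < n) : jacobiExp n (n - 1 - k) = tri k := by
  rw [jacobiExp, if_neg (by omega)]
  congr 1
  omega

def jacobiCoeff (n j : ℕ) : R⟦X⟧ := (-1) ^ (j + n) * X ^ jacobiExp n j * qBinom (2 * n) j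

theorem jacobiCoeff_of_lt {n j : ℕ} (h : 2 * n < j) : (jacobiCoeff n j : R⟦X⟧) = 0 := by
  rw [jacobiCoeff, qBinom_eq_zero_of_lt h, mul_zero]

theorem jacobiCoeff_succ_zero (n : ℕ) :
    (jacobiCoeff (n + 1) 0 : R⟦X⟧) = -X ^ n * jacobiCoeff n 0 := by
  have hE : jacobiExp (n + 1) 0 = n + jacobiExp n 0 := by
    have h1 := two_mul_jacobiExp (n + 1) 0
    have h2 := two_mul_jacobiExp n 0
    push_cast at h1 h2
    linarith
  rw [jacobiCoeff, jacobiCoeff, hE, qBinom_zero_right, qBinom_zero_right]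
  ring

theorem jacobiCoeff_succ_one (n : ℕ) :
    (jacobiCoeff (n + 1) 1 : R⟦X⟧) =
      (1 + X ^ (2 * n + 1)) * jacobiCoeff n 0 - X ^ n * jacobiCoeff n 1 := by
  have hE : n + jacobiExp n 1 = jacobiExp n 0 + 1 := by
    have h1 := two_mul_jacobiExp n 1
    have h2 := two_mul_jacobiExp n 0
    push_cast at h1 h2
    linarith
  have hx : (X : R⟦X⟧) ^ n * X ^ jacobiExp n 1 = X ^ jacobiExp n 0 * X := by
    rw [← pow_add, ← pow_succ, hE]
  simp only [jacobiCoeff, jacobiExp_succ_succ, qBinom_zero_right, mul_add, qBinom_add_two_one]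
  linear_combination (-(-1 : R⟦X⟧) ^ n * qBinom (2 * n) 1) * hx

theorem jacobiCoeff_succ_add_two (n j : ℕ) :
    (jacobiCoeff (n + 1) (j + 2) : R⟦X⟧) = (1 + X ^ (2 * n + 1)) * jacobiCoeff n (j + 1)
      - X ^ n * jacobiCoeff n (j + 2) - X ^ (n + 1) * jacobiCoeff n j := by
  rcases le_or_gt j (2 * n) with hj | hj
  · obtain ⟨s, hs⟩ := Nat.exists_eq_add_of_le hj
    have h1 := two_mul_jacobiExp n j
    have h2 := two_mul_jacobiExp n (j + 1)
    have h3 := two_mul_jacobiExp n (j + 2)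
    push_cast at h1 h2 h3
    have hx2 :
        (X : R⟦X⟧) ^ n * X ^ jacobiExp n (j + 2) = X ^ (j + 2) * X ^ jacobiExp n (j + 1) := by
      rw [← pow_add, ← pow_add]
      congr 1
      zify
      linarith
    have hx3 : (X : R⟦X⟧) ^ (n + 1) * X ^ jacobiExp n j = X ^ s * X ^ jacobiExp n (j + 1) := by
      rw [← pow_add, ← pow_add]
      congr 1
      zify at hs ⊢
      linarith
    simp only [jacobiCoeff, jacobiExp_succ_succ, show 2 * (n + 1) = j + s + 2 by omega, hs,
      qBinom_add_two_add_two]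
    linear_combination (-1 : R⟦X⟧) ^ (j + n) * qBinom (j + s) (j + 2) * hx2
      + (-1 : R⟦X⟧) ^ (j + n) * qBinom (j + s) j * hx3
  · simp only [jacobiCoeff_of_lt (show 2 * (n + 1) < j + 2 by omega), jacobiCoeff_of_lt hj,
      jacobiCoeff_of_lt (show 2 * n < j + 1 by omega),
      jacobiCoeff_of_lt (show 2 * n < j + 2 by omega)]
    ring

local notation "Z" => Polynomial.X

def jacobiPoly (n : ℕ) : Polynomial R⟦X⟧ :=
  ∑ j ∈ range (2 * n + 1), Polynomial.C (jacobiCoeff n j) * Z ^ j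

theorem coeff_jacobiPoly (n j : ℕ) :
    (jacobiPoly n : Polynomial R⟦X⟧).coeff j = jacobiCoeff n j := by
  simp only [jacobiPoly, Polynomial.finsetSum_coeff, Polynomial.coeff_C_mul_X_pow, sum_ite_eq,
    mem_range]
  split_ifs with h
  · rfl
  · exact (jacobiCoeff_of_lt (by omega)).symm

theorem jacobiPoly_succ (n : ℕ) :
    (jacobiPoly (n + 1) : Polynomial R⟦X⟧) =
      (Z - Polynomial.C (X ^ n : R⟦X⟧)) * (1 - Polynomial.C (X ^ (n + 1)) * Z) *
        jacobiPoly n := by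
  have hF : (Z - Polynomial.C (X ^ n : R⟦X⟧)) * (1 - Polynomial.C (X ^ (n + 1)) * Z) *
      jacobiPoly n = Polynomial.C (-X ^ n) * jacobiPoly n
        + Polynomial.C (1 + X ^ (2 * n + 1)) * (Z * jacobiPoly n)
        - Polynomial.C (X ^ (n + 1)) * (Z * (Z * jacobiPoly n)) := by
    simp only [map_neg, map_add, map_one, map_pow, two_mul]
    ring
  refine Polynomial.ext fun j => ?_
  rw [hF]
  rcases j with _ | _ | j <;>
    simp only [Polynomial.coeff_sub, Polynomial.coeff_add, Polynomial.coeff_C_mul,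
      Polynomial.coeff_X_mul, Polynomial.coeff_X_mul_zero, coeff_jacobiPoly, zero_add]
  · rw [jacobiCoeff_succ_zero]; ring
  · rw [jacobiCoeff_succ_one]; ring
  · rw [jacobiCoeff_succ_add_two]; ring

theorem jacobiPoly_zero : (jacobiPoly 0 : Polynomial R⟦X⟧) = 1 := by
  simp [jacobiPoly, jacobiCoeff, jacobiExp, tri]

theorem eval_one_jacobiPoly_succ (n : ℕ) :
    (jacobiPoly (n + 1) : Polynomial R⟦X⟧).eval 1 = 0 := by
  induction n with
  | zero => simp [jacobiPoly_succ, jacobiPoly_zero]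
  | succ n ih => rw [jacobiPoly_succ, Polynomial.eval_mul, ih, mul_zero]

theorem eval_one_derivative_jacobiPoly_succ (n : ℕ) :
    (Polynomial.derivative (jacobiPoly (n + 1) : Polynomial R⟦X⟧)).eval 1 =
      qProd 0 (n + 1) * qProd 0 n := by
  induction n with
  | zero => simp [jacobiPoly_succ, jacobiPoly_zero, qProd]
  | succ n ih =>
    rw [jacobiPoly_succ (n + 1), Polynomial.derivative_mul, Polynomial.eval_add,
      Polynomial.eval_mul, Polynomial.eval_mul, eval_one_jacobiPoly_succ, mul_zero, zero_add, ih,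
      qProd_succ (Nat.zero_le (n + 1)), qProd_succ (Nat.zero_le n)]
    simp only [Polynomial.eval_mul, Polynomial.eval_sub, Polynomial.eval_X, Polynomial.eval_C,
      Polynomial.eval_one, mul_one]
    ring

theorem sum_mul_jacobiCoeff (n : ℕ) :
    ∑ j ∈ range (2 * (n + 1) + 1), (j : R⟦X⟧) * jacobiCoeff (n + 1) j =
      qProd 0 (n + 1) * qProd 0 n := by
  rw [← eval_one_derivative_jacobiPoly_succ, jacobiPoly, map_sum, Polynomial.eval_finsetSum]
  refine sum_congr rfl fun j _ => ?_
  rw [Polynomial.derivative_C_mul_X_pow, Polynomial.eval_mul, Polynomial.eval_C,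
    Polynomial.eval_pow, Polynomial.eval_X, one_pow, mul_one, mul_comm]

theorem X_pow_dvd_X_pow_mul {M e m : ℕ} {f : R⟦X⟧} (hf : X ^ m ∣ f) (h : M ≤ e + m) :
    X ^ M ∣ X ^ e * f :=
  (pow_dvd_pow X h).trans (pow_add (X : R⟦X⟧) e m ▸ mul_dvd_mul_left _ hf)

theorem qProd_mul_qBinom {n r s : ℕ} (hs : s ≤ n) :
    (qProd 0 n * qBinom (r + s) r : R⟦X⟧) = qProd r (r + s) * qProd s n := by
  refine ((isUnit_qProd 0 r).mul (isUnit_qProd 0 s)).mul_left_cancel ?_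
  calc qProd 0 r * qProd 0 s * (qProd 0 n * qBinom (r + s) r)
      = qProd 0 n * (qProd 0 r * qProd 0 s * qBinom (r + s) r) := by ring
    _ = (qProd 0 r * qProd r (r + s)) * (qProd 0 s * qProd s n) := by
      rw [qProd_mul_qProd_mul_qBinom, qProd_mul_qProd (Nat.zero_le r) (Nat.le_add_right r s),
        qProd_mul_qProd (Nat.zero_le s) hs, mul_comm]
    _ = qProd 0 r * qProd 0 s * (qProd r (r + s) * qProd s n) := by ring

theorem X_pow_dvd_one_sub_mul_qProd_mul_qBinom_sub_one {n r s : ℕ} (hs : s ≤ n)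
    (hsr : s ≤ r) :
    (X : R⟦X⟧) ^ min n (s + 1) ∣ (1 - X ^ n) * qProd 0 n * qBinom (r + s) r - 1 := by
  rw [mul_assoc, qProd_mul_qBinom hs]
  refine X_pow_dvd_mul_sub_one (X_pow_dvd_one_sub_X_pow_sub_one (min_le_left _ _))
    (X_pow_dvd_mul_sub_one ?_ ?_)
  · exact (pow_dvd_pow X (by omega)).trans (X_pow_dvd_qProd_sub_one r _)
  · exact (pow_dvd_pow X (min_le_right _ _)).trans (X_pow_dvd_qProd_sub_one s n)

theorem X_pow_dvd_one_sub_mul_qProd_mul_jacobiCoeff_sub {N j : ℕ} (hj : j ≤ 2 * N) :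
    (X : R⟦X⟧) ^ N ∣
      (1 - X ^ N) * qProd 0 N * jacobiCoeff N j - (-1) ^ (j + N) * X ^ jacobiExp N j := by
  have key :
      (X : R⟦X⟧) ^ (N - jacobiExp N j) ∣ (1 - X ^ N) * qProd 0 N * qBinom (2 * N) j - 1 := by
    rcases le_or_gt N j with h | h
    · obtain ⟨k, rfl⟩ := Nat.exists_eq_add_of_le h
      have hu := X_pow_dvd_one_sub_mul_qProd_mul_qBinom_sub_one (R := R) (n := N) (r := N + k)
        (s := N - k) (by omega) (by omega)
      rw [show N + k + (N - k) = 2 * N by omega] at hu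
      refine (pow_dvd_pow X ?_).trans hu
      have := le_tri k
      rw [jacobiExp_add_self]
      omega
    · obtain ⟨k, hkN, hk⟩ : ∃ k, k < N ∧ j = N - 1 - k :=
        ⟨N - 1 - j, by omega, by omega⟩
      have hu := X_pow_dvd_one_sub_mul_qProd_mul_qBinom_sub_one (R := R) (n := N) (r := 2 * N - j)
        (s := j) (by omega) (by omega)
      rw [qBinom_symm, show 2 * N - j + j = 2 * N by omega] at hu
      refine (pow_dvd_pow X ?_).trans hu
      have := le_tri k
      rw [hk, jacobiExp_sub_one_sub N k hkN]
      omega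
  have hE :
      (1 - X ^ N : R⟦X⟧) * qProd 0 N * jacobiCoeff N j - (-1) ^ (j + N) * X ^ jacobiExp N j =
      (-1) ^ (j + N) * (X ^ jacobiExp N j * ((1 - X ^ N) * qProd 0 N * qBinom (2 * N) j - 1)) := by
    rw [jacobiCoeff]; ring
  rw [hE]
  exact (X_pow_dvd_X_pow_mul key (by omega)).mul_left _

theorem X_pow_dvd_qProd_cube_sub_sum (n : ℕ) :
    (X : R⟦X⟧) ^ (n + 1) ∣ qProd 0 (n + 1) ^ 3 - ∑ j ∈ range (2 * (n + 1) + 1),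
      C ((j : R) * (-1) ^ (j + (n + 1))) * X ^ jacobiExp (n + 1) j := by
  have hcube : (qProd 0 (n + 1) ^ 3 : R⟦X⟧) = ∑ j ∈ range (2 * (n + 1) + 1),
      (j : R⟦X⟧) * ((1 - X ^ (n + 1)) * qProd 0 (n + 1) * jacobiCoeff (n + 1) j) := by
    calc (qProd 0 (n + 1) ^ 3 : R⟦X⟧)
        = (1 - X ^ (n + 1)) * qProd 0 (n + 1) * (qProd 0 (n + 1) * qProd 0 n) := by
          rw [qProd_succ (Nat.zero_le n)]; ring
      _ = _ := by
          rw [← sum_mul_jacobiCoeff, mul_sum]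
          exact sum_congr rfl fun j _ => by ring
  rw [hcube, ← sum_sub_distrib]
  refine dvd_sum fun j hj => ?_
  have hC : C ((j : R) * (-1) ^ (j + (n + 1))) * X ^ jacobiExp (n + 1) j =
      (j : R⟦X⟧) * ((-1) ^ (j + (n + 1)) * X ^ jacobiExp (n + 1) j) := by
    simp only [map_mul, map_pow, map_neg, map_one, map_natCast]; ring
  rw [hC, ← mul_sub]
  exact (X_pow_dvd_one_sub_mul_qProd_mul_jacobiCoeff_sub
    (Nat.lt_succ_iff.1 (mem_range.1 hj))).mul_left _

theorem neg_one_pow_sub_one_sub_add {N k : ℕ} (hk : k < N) :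
    (-1 : R) ^ (N - 1 - k + N) = -(-1) ^ k := by
  obtain ⟨d, rfl⟩ := Nat.exists_eq_add_of_lt hk
  rw [show k + d + 1 - 1 - k + (k + d + 1) = k + 1 + 2 * d by omega, pow_add, pow_add, pow_mul]
  simp

theorem sum_range_natCast_mul_neg_one_pow_X_pow_jacobiExp (N : ℕ) :
    ∑ j ∈ range (2 * N + 1), C ((j : R) * (-1) ^ (j + N)) * (X : R⟦X⟧) ^ jacobiExp N j =
      ∑ k ∈ range N, C ((-1) ^ k * (2 * k + 1 : R)) * X ^ tri k
        + C ((2 * N : R) * (-1) ^ N) * X ^ tri N := by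
  rw [show 2 * N + 1 = N + (N + 1) by ring, sum_range_add, ← sum_range_reflect, sum_range_succ,
    ← add_assoc, ← sum_add_distrib]
  congr 1
  · refine sum_congr rfl fun k hk => ?_
    have hk : k < N := mem_range.1 hk
    rw [jacobiExp_sub_one_sub N k hk, jacobiExp_add_self, ← add_mul, ← map_add,
      neg_one_pow_sub_one_sub_add hk, show N + k + N = k + 2 * N by ring, pow_add, pow_mul,
      Nat.cast_sub (by omega), Nat.cast_sub (by omega)]
    congr 2
    push_cast
    ring
  · rw [jacobiExp_add_self, show N + N + N = N + 2 * N by ring, pow_add, pow_mul]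
    push_cast
    ring_nf

theorem X_pow_dvd_qProd_cube_sub (n : ℕ) :
    (X : R⟦X⟧) ^ (n + 1) ∣ qProd 0 (n + 1) ^ 3 -
      ∑ k ∈ range (n + 1), C ((-1) ^ k * (2 * k + 1 : R)) * X ^ tri k := by
  have h := X_pow_dvd_qProd_cube_sub_sum (R := R) n
  rw [sum_range_natCast_mul_neg_one_pow_X_pow_jacobiExp] at h
  have hN :
      (X : R⟦X⟧) ^ (n + 1) ∣ C ((2 * (n + 1 : ℕ) : R) * (-1) ^ (n + 1)) * X ^ tri (n + 1) :=
    (pow_dvd_pow X (le_tri (n + 1))).mul_left _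
  simpa [sub_add_eq_sub_sub, sub_add_cancel] using dvd_add h hN

theorem coeff_qProd_cube {a n : ℕ} (ha : a ≤ n) :
    coeff a (qProd 0 (n + 1) ^ 3 : R⟦X⟧) =
      ∑ k ∈ range (n + 1), if a = tri k then (-1) ^ k * (2 * k + 1 : R) else 0 := by
  have h := X_pow_dvd_iff.1 (X_pow_dvd_qProd_cube_sub (R := R) n) a (by omega)
  rw [map_sub, sub_eq_zero, map_sum] at h
  simp only [h, coeff_C_mul_X_pow]

def lambertTerm (m : ℕ) : R⟦X⟧ := mk fun i => if m ∣ i ∧ i ≠ 0 then (m : R) else 0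

theorem one_sub_X_pow_mul_lambertTerm (m : ℕ) :
    (1 - X ^ m) * lambertTerm m = (m : R⟦X⟧) * X ^ m := by
  ext i
  rw [sub_mul, one_mul, mul_comm, map_sub, coeff_mul_X_pow', ← map_natCast C, coeff_C_mul_X_pow,
    lambertTerm, coeff_mk, coeff_mk]
  rcases Nat.eq_zero_or_pos m with rfl | hm
  · simp
  · by_cases hmi : m ≤ i
    · have hdvd : m ∣ i - m ↔ m ∣ i := Nat.dvd_sub_iff_left hmi dvd_rfl
      have hsub : i - m ≠ 0 ↔ i ≠ m := by omega
      simp only [hmi, if_true, hdvd, hsub, show i ≠ 0 by omega, ne_eq, not_false_eq_true,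
        and_true]
      by_cases him : i = m
      · simp [him]
      · simp [him]
    · have : ¬ (m ∣ i ∧ i ≠ 0) := fun h => hmi (Nat.le_of_dvd (Nat.pos_of_ne_zero h.2) h.1)
      simp [hmi, this, show i ≠ m by omega]

theorem coeff_X_mul_derivative (f : R⟦X⟧) (a : ℕ) :
    coeff a (X * derivative R f) = a * coeff a f := by
  rcases a with _ | a
  · simp
  · rw [coeff_succ_X_mul, coeff_derivative, mul_comm, Nat.cast_succ]

theorem X_mul_derivative_qProd (t : ℕ) :
    X * derivative R (qProd 0 t) = -(qProd 0 t * ∑ m ∈ Ioc 0 t, lambertTerm m) := by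
  induction t with
  | zero => simp
  | succ t ih =>
    have hL := one_sub_X_pow_mul_lambertTerm (R := R) (t + 1)
    rw [qProd_succ (Nat.zero_le t), sum_Ioc_succ_top (Nat.zero_le t), Derivation.leibniz]
    simp only [smul_eq_mul, map_sub, Derivation.map_one_eq_zero, Derivation.leibniz_pow,
      derivative_X, nsmul_eq_mul]
    push_cast at hL ⊢
    linear_combination (1 - X ^ (t + 1) : R⟦X⟧) * ih + qProd 0 t * hL

theorem natCast_mul_coeff_qProd_cube (a t : ℕ) :
    (a : R) * coeff a (qProd 0 t ^ 3 : R⟦X⟧) =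
      -3 * coeff a (qProd 0 t ^ 3 * ∑ m ∈ Ioc 0 t, lambertTerm m : R⟦X⟧) := by
  have h : X * derivative R (qProd 0 t ^ 3) =
      C (-3) * (qProd 0 t ^ 3 * ∑ m ∈ Ioc 0 t, lambertTerm m) := by
    rw [Derivation.leibniz_pow, smul_eq_mul, nsmul_eq_mul,
      show (X : R⟦X⟧) *
          (((3 : ℕ) : R⟦X⟧) * (qProd 0 t ^ (3 - 1) * derivative R (qProd 0 t))) =
        3 * qProd 0 t ^ 2 * (X * derivative R (qProd 0 t)) by push_cast; ring,
      X_mul_derivative_qProd, map_neg, map_ofNat]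
    ring
  rw [← coeff_X_mul_derivative, h, coeff_C_mul]

theorem X_pow_dvd_S12_sub_sum_lambertTerm (t : ℕ) :
    (X : ℤ⟦X⟧) ^ (t + 1) ∣ S12 - ∑ m ∈ Ioc 0 t, lambertTerm m := by
  refine X_pow_dvd_iff.2 fun i hi => ?_
  rw [map_sub, sub_eq_zero, map_sum, S12, coeff_mk]
  simp only [lambertTerm, coeff_mk]
  split_ifs with h0
  · simp [h0]
  · rw [← sum_filter]
    congr 1
    ext d
    simp only [mem_filter, mem_Ioc, Nat.mem_divisors, h0, ne_eq, not_false_eq_true, and_true]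
    constructor
    · exact fun h => ⟨⟨Nat.pos_of_dvd_of_pos h (by omega),
        (Nat.le_of_dvd (by omega) h).trans (by omega)⟩, h⟩
    · exact fun h => h.2

theorem natCast_mul_coeff_qProd_cube_of_le {a t : ℕ} (hat : a ≤ t) :
    (a : ℤ) * coeff a (qProd 0 t ^ 3 : ℤ⟦X⟧) = -3 * coeff a (qProd 0 t ^ 3 * S12) := by
  have h := X_pow_dvd_iff.1 ((X_pow_dvd_S12_sub_sum_lambertTerm t).mul_left (qProd 0 t ^ 3)) a
    (by omega)
  rw [mul_sub, map_sub, sub_eq_zero] at h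
  rw [natCast_mul_coeff_qProd_cube, h]

theorem coeff_qProd_cube_mul_S12_succ (a : ℕ) :
    coeff a (qProd 0 a ^ 3 * S12 : ℤ⟦X⟧) = coeff a (qProd 0 (a + 1) ^ 3 * S12) := by
  have h : (X : ℤ⟦X⟧) ^ (a + 1) ∣ qProd 0 (a + 1) ^ 3 * S12 - qProd 0 a ^ 3 * S12 := by
    rw [← qProd_mul_qProd (Nat.zero_le a) (Nat.le_succ a), mul_pow,
      show qProd 0 a ^ 3 * qProd a (a + 1) ^ 3 * S12 - qProd 0 a ^ 3 * S12 =
        qProd 0 a ^ 3 * S12 * (qProd a (a + 1) ^ 3 - 1 ^ 3) by ring]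
    exact ((X_pow_dvd_qProd_sub_one a (a + 1)).trans (sub_dvd_pow_sub_pow _ _ 3)).mul_left _
  have := X_pow_dvd_iff.1 h a (by omega)
  rw [map_sub, sub_eq_zero] at this
  exact this.symm

theorem one_add_mul_add_three_div_two (n : ℕ) : 1 + n * (n + 3) / 2 = tri (n + 1) := by
  have h : n * (n + 3) + 2 = 2 * tri (n + 1) := by
    rw [two_mul_tri]; ring
  omega

theorem three_mul_choose_add_choose (n : ℕ) :
    (3 : ℤ) * ((n + 3).choose 3 + (n + 2).choose 3) = tri (n + 1) * (2 * n + 3) := by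
  have e1 := Nat.add_one_mul_choose_eq (n + 2) 2
  have e2 := Nat.add_one_mul_choose_eq (n + 1) 2
  have e3 := Nat.add_one_mul_choose_eq (n + 1) 1
  have e4 := Nat.choose_succ_succ' (n + 1) 1
  have hT : (n + 2).choose 2 = tri (n + 1) := by
    have := two_mul_tri (n + 1)
    rw [Nat.choose_one_right] at e3
    linarith
  rw [Nat.choose_one_right] at e3 e4
  zify at e1 e2 e3 e4 hT
  push_cast at e1 e2 e3 e4 hT ⊢
  linear_combination -e1 - e2 - (n + 2 : ℤ) * e4 - e3 + (2 * n + 3 : ℤ) * hT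

theorem three_mul_coeff_T12 (a : ℕ) :
    3 * coeff a T12 = -(a : ℤ) *
      ∑ k ∈ range (a + 1), if a = tri k then (-1) ^ k * (2 * k + 1 : ℤ) else 0 := by
  rw [T12, coeff_mk, mul_sum, mul_sum, sum_range_succ, sum_range_succ',
    if_neg (by rw [one_add_mul_add_three_div_two]; have := le_tri (a + 1); omega)]
  rw [show (-(a : ℤ)) * (if a = tri 0 then (-1) ^ 0 * (2 * ((0 : ℕ) : ℤ) + 1) else 0) = 0 by
    split_ifs with h <;> simp_all [tri]]
  simp only [mul_zero, add_zero]
  refine sum_congr rfl fun n _ => ?_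
  rw [one_add_mul_add_three_div_two]
  by_cases h : tri (n + 1) = a
  · subst h
    rw [if_pos rfl, if_pos rfl, mul_left_comm, three_mul_choose_add_choose]
    push_cast
    ring
  · rw [if_neg h, if_neg (Ne.symm h), mul_zero, mul_zero]

end

end JacobiCube

/-- After cancelling the factor `q^{1/8}` of `η(q)³ = q^{1/8} ∏_{m≥1} (1 − q^m)³`, the infinite
product is read coefficientwise: its truncation at `m ≤ j` already fixes the coefficient of
`q^j`. -/
theorem stmt12 :
    ∀ j : ℕ,
      coeff j ((∏ m ∈ Finset.Icc 1 j, (1 - (X : PowerSeries ℤ) ^ m) ^ 3) * S12) =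
        coeff j T12 := by
  intro a
  have hprod :
      ∏ m ∈ Finset.Icc 1 a, (1 - (X : PowerSeries ℤ) ^ m) ^ 3 = JacobiCube.qProd 0 a ^ 3 := by
    rw [Finset.prod_pow, JacobiCube.qProd, ← Finset.Icc_add_one_left_eq_Ioc, zero_add]
  refine mul_left_cancel₀ (three_ne_zero (α := ℤ)) ?_
  calc 3 * coeff a ((∏ m ∈ Finset.Icc 1 a, (1 - (X : PowerSeries ℤ) ^ m) ^ 3) * S12)
      = 3 * coeff a (JacobiCube.qProd 0 (a + 1) ^ 3 * S12) := by
        rw [hprod, JacobiCube.coeff_qProd_cube_mul_S12_succ]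
    _ = -(a : ℤ) * coeff a (JacobiCube.qProd 0 (a + 1) ^ 3 : PowerSeries ℤ) := by
        linarith [JacobiCube.natCast_mul_coeff_qProd_cube_of_le (Nat.le_succ a)]
    _ = 3 * coeff a T12 := by
        rw [JacobiCube.coeff_qProd_cube le_rfl, JacobiCube.three_mul_coeff_T12]
end
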